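/- Let A₁ be an H₊-matrix with diagonal part D₁ and off-diagonal part B = L₁ + U₁, and let A₁ = (M₁+I-L₁)-(N₁+I-L₁) be an H-compatible splitting (⟨A₁⟩ = ⟨M₁+I-L₁⟩ - |N₁+I-L₁|). If Ω₁ is a positive diagonal matrix with Ω₁ < D₁ and ⟨A₁⟩ + 2Ω₁ - D₁ - |B| is an M-matrix, then ρ(T) < 1 where T = |(M₁+Ω₁+I-L₁)^{-1}|(|N₁+I-L₁| + |Ω₁-A₁|). -/

import Mathlib

open Matrix BigOperators Filter

/-- Componentwise absolute value of a vector. -/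
def vecAbs {n : ℕ} (v : Fin n → ℝ) : Fin n → ℝ := fun i => |v i|

/-- Entrywise absolute value of a matrix. -/
def matAbs {n : ℕ} (A : Matrix (Fin n) (Fin n) ℝ) : Matrix (Fin n) (Fin n) ℝ :=
  Matrix.of fun i j => |A i j|

/-- A Z-matrix: off-diagonal entries are nonpositive. -/
def IsZMatrix {n : ℕ} (A : Matrix (Fin n) (Fin n) ℝ) : Prop :=
  ∀ i j, i ≠ j → A i j ≤ 0

/-- An M-matrix: a Z-matrix that is invertible with entrywise nonnegative inverse. -/
def IsMMatrix {n : ℕ} (A : Matrix (Fin n) (Fin n) ℝ) : Prop :=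
  IsZMatrix A ∧ IsUnit A.det ∧ ∀ i j, 0 ≤ A⁻¹ i j

/-- The comparison matrix ⟨A⟩. -/
def cmpMatrix {n : ℕ} (A : Matrix (Fin n) (Fin n) ℝ) : Matrix (Fin n) (Fin n) ℝ :=
  Matrix.of fun i j => if i = j then |A i j| else -|A i j|

/-- An H-matrix: its comparison matrix is an M-matrix. -/
def IsHMatrix {n : ℕ} (A : Matrix (Fin n) (Fin n) ℝ) : Prop :=
  IsMMatrix (cmpMatrix A)

/-- An H₊-matrix: an H-matrix with positive diagonal entries. -/
def IsHPlusMatrix {n : ℕ} (A : Matrix (Fin n) (Fin n) ℝ) : Prop :=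
  IsHMatrix A ∧ ∀ i, 0 < A i i

/-- A P-matrix: all principal minors are positive. -/
def IsPMatrix {n : ℕ} (A : Matrix (Fin n) (Fin n) ℝ) : Prop :=
  ∀ s : Finset (Fin n),
    0 < (A.submatrix (fun i : s => (i : Fin n)) (fun i : s => (i : Fin n))).det

/-- Spectral radius: supremum of the moduli of the (complex) eigenvalues. -/
noncomputable def specRad {n : ℕ} (A : Matrix (Fin n) (Fin n) ℝ) : ℝ :=
  sSup {x : ℝ | ∃ μ : ℂ, (A.map (Complex.ofReal)).charpoly.IsRoot μ ∧ x = ‖μ‖}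

/-- Strictly lower triangular part of a matrix. -/
def strictLower {n : ℕ} (A : Matrix (Fin n) (Fin n) ℝ) : Matrix (Fin n) (Fin n) ℝ :=
  Matrix.of fun i j => if (j : ℕ) < (i : ℕ) then A i j else 0

/-- Strictly upper triangular part of a matrix. -/
def strictUpper {n : ℕ} (A : Matrix (Fin n) (Fin n) ℝ) : Matrix (Fin n) (Fin n) ℝ :=
  Matrix.of fun i j => if (i : ℕ) < (j : ℕ) then A i j else 0

/-- A positive diagonal matrix. -/
def posDiag {n : ℕ} (Ω : Matrix (Fin n) (Fin n) ℝ) : Prop :=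
  (∀ i j, i ≠ j → Ω i j = 0) ∧ ∀ i, 0 < Ω i i

/-! Put `X := M₁ + Ω₁ + I - L₁` and `W := ⟨A₁⟩ + 2Ω₁ - D₁ - |B|`. H-compatibility and `Ω₁ < D₁`
give `⟨X⟩ = ⟨A₁⟩ + |N₁ + I - L₁| + Ω₁ = W + R` with `R := |N₁ + I - L₁| + |Ω₁ - A₁| ≥ 0`.
For `v := W⁻¹ 𝟙 > 0` this yields `⟨X⟩ v ≥ W v > 0`, so `X` is an H-matrix and `|X⁻¹| ≤ ⟨X⟩⁻¹`;
hence `T v ≤ ⟨X⟩⁻¹ (⟨X⟩ - W) v = v - ⟨X⟩⁻¹ 𝟙 < v`, and a nonnegative `T` with `T v < v` for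
some `v > 0` has `ρ(T) < 1`. -/

section

variable {n : ℕ}

theorem mulVec_apply_mono {P : Matrix (Fin n) (Fin n) ℝ} (hP : ∀ i j, 0 ≤ P i j)
    {a b : Fin n → ℝ} (hab : a ≤ b) (i : Fin n) : (P *ᵥ a) i ≤ (P *ᵥ b) i :=
  dotProduct_le_dotProduct_of_nonneg_left hab (hP i)

theorem mulVec_apply_nonneg {P : Matrix (Fin n) (Fin n) ℝ} (hP : ∀ i j, 0 ≤ P i j)
    {a : Fin n → ℝ} (ha : 0 ≤ a) (i : Fin n) : 0 ≤ (P *ᵥ a) i :=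
  dotProduct_nonneg_of_nonneg (hP i) ha

theorem IsZMatrix.mulVec_apply_nonpos {E : Matrix (Fin n) (Fin n) ℝ} (hE : IsZMatrix E)
    {w : Fin n → ℝ} (hw : 0 ≤ w) {i : Fin n} (hwi : w i = 0) : (E *ᵥ w) i ≤ 0 :=
  show ∑ j, E i j * w j ≤ 0 from Finset.sum_nonpos fun j _ => by
    rcases eq_or_ne i j with rfl | hij
    · simp [hwi]
    · exact mul_nonpos_of_nonpos_of_nonneg (hE i j hij) (hw j)

/-- Minimum principle: compare `x` with the largest multiple `t • v` lying below it. -/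
theorem IsZMatrix.nonneg_of_mulVec_nonneg {E : Matrix (Fin n) (Fin n) ℝ} (hE : IsZMatrix E)
    {v : Fin n → ℝ} (hv : ∀ i, 0 < v i) (hEv : ∀ i, 0 < (E *ᵥ v) i)
    {x : Fin n → ℝ} (hEx : 0 ≤ E *ᵥ x) : 0 ≤ x := by
  by_contra hneg
  obtain ⟨k, hk⟩ : ∃ k, x k < 0 := by simpa [Pi.le_def] using hneg
  have : Nonempty (Fin n) := ⟨k⟩
  obtain ⟨i, hi⟩ := Finite.exists_min fun j => x j / v j
  set t := x i / v i
  have ht : t < 0 := (hi k).trans_lt (div_neg_of_neg_of_pos hk (hv k))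
  have hw : 0 ≤ x - t • v := fun j => by
    simpa using (le_div_iff₀ (hv j)).mp (hi j)
  have hwi : (x - t • v) i = 0 := by
    simp [t, div_mul_cancel₀ _ (hv i).ne']
  have h := hE.mulVec_apply_nonpos hw hwi
  rw [mulVec_sub, mulVec_smul, Pi.sub_apply, Pi.smul_apply, smul_eq_mul] at h
  linarith [mul_neg_of_neg_of_pos ht (hEv i), show 0 ≤ (E *ᵥ x) i from hEx i]

theorem IsZMatrix.isMMatrix_of_mulVec_pos {E : Matrix (Fin n) (Fin n) ℝ} (hE : IsZMatrix E)
    {v : Fin n → ℝ} (hv : ∀ i, 0 < v i) (hEv : ∀ i, 0 < (E *ᵥ v) i) : IsMMatrix E := by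
  have hdet : IsUnit E.det := by
    rw [isUnit_iff_ne_zero]
    intro h0
    obtain ⟨y, hy0, hy⟩ := exists_mulVec_eq_zero_iff.mpr h0
    have hy_nonneg : 0 ≤ y := hE.nonneg_of_mulVec_nonneg hv hEv hy.ge
    have hy_nonpos : 0 ≤ -y :=
      hE.nonneg_of_mulVec_nonneg hv hEv (by rw [mulVec_neg, hy, neg_zero])
    exact hy0 (le_antisymm (neg_nonneg.mp hy_nonpos) hy_nonneg)
  refine ⟨hE, hdet, fun i j => ?_⟩
  have hcol : E *ᵥ (E⁻¹ *ᵥ Pi.single j 1) = Pi.single j 1 := by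
    rw [mulVec_mulVec, mul_nonsing_inv _ hdet, one_mulVec]
  have h := hE.nonneg_of_mulVec_nonneg hv hEv (hcol ▸ Pi.single_nonneg.2 zero_le_one) i
  rwa [mulVec_single_one] at h

theorem IsMMatrix.le_inv_mulVec {E : Matrix (Fin n) (Fin n) ℝ} (hE : IsMMatrix E)
    {x b : Fin n → ℝ} (h : E *ᵥ x ≤ b) : x ≤ E⁻¹ *ᵥ b := fun i =>
  calc x i = (E⁻¹ *ᵥ (E *ᵥ x)) i := by rw [mulVec_mulVec, nonsing_inv_mul _ hE.2.1, one_mulVec]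
    _ ≤ (E⁻¹ *ᵥ b) i := mulVec_apply_mono hE.2.2 h i

/-- No row of the invertible matrix `E⁻¹ ≥ 0` vanishes. -/
theorem IsMMatrix.inv_mulVec_pos {E : Matrix (Fin n) (Fin n) ℝ} (hE : IsMMatrix E)
    {w : Fin n → ℝ} (hw : ∀ i, 0 < w i) (i : Fin n) : 0 < (E⁻¹ *ᵥ w) i := by
  obtain ⟨-, hdet, hinv⟩ := hE
  refine (mulVec_apply_nonneg hinv (fun j => (hw j).le) i).lt_of_ne' fun h0 => ?_
  have hterms := (Finset.sum_eq_zero_iff_of_nonneg fun j _ =>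
    mul_nonneg (hinv i j) (hw j).le).mp (show ∑ j, E⁻¹ i j * w j = 0 from h0)
  have hrow : ∀ j, E⁻¹ i j = 0 := fun j =>
    (mul_eq_zero.mp (hterms j (Finset.mem_univ j))).resolve_right (hw j).ne'
  simpa [mul_apply, hrow] using congrFun (congrFun (nonsing_inv_mul E hdet) i) i

theorem isZMatrix_cmpMatrix (A : Matrix (Fin n) (Fin n) ℝ) : IsZMatrix (cmpMatrix A) :=
  fun i j hij => by simp [cmpMatrix, hij]

theorem cmpMatrix_mulVec_vecAbs_le (A : Matrix (Fin n) (Fin n) ℝ) (u : Fin n → ℝ) :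
    cmpMatrix A *ᵥ vecAbs u ≤ vecAbs (A *ᵥ u) := by
  intro i
  simp only [vecAbs, mulVec, dotProduct]
  rw [← Finset.add_sum_erase _ _ (Finset.mem_univ i),
    ← Finset.add_sum_erase _ _ (Finset.mem_univ i)]
  have hoff : ∑ j ∈ Finset.univ.erase i, cmpMatrix A i j * |u j|
      = -∑ j ∈ Finset.univ.erase i, |A i j * u j| := by
    rw [← Finset.sum_neg_distrib]
    refine Finset.sum_congr rfl fun j hj => ?_
    simp [cmpMatrix, (Finset.ne_of_mem_erase hj).symm, abs_mul]
  have hdiag : cmpMatrix A i i * |u i| = |A i i * u i| := by simp [cmpMatrix, abs_mul]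
  rw [hoff, hdiag]
  have := Finset.abs_sum_le_sum_abs (fun j => A i j * u j) (Finset.univ.erase i)
  have := abs_sub_abs_le_abs_sub (A i i * u i) (-∑ j ∈ Finset.univ.erase i, A i j * u j)
  rw [abs_neg, sub_neg_eq_add] at this
  linarith

theorem IsHMatrix.isUnit_det {A : Matrix (Fin n) (Fin n) ℝ} (hA : IsHMatrix A) :
    IsUnit A.det := by
  rw [isUnit_iff_ne_zero]
  intro h0
  obtain ⟨y, hy0, hy⟩ := exists_mulVec_eq_zero_iff.mpr h0
  have h : vecAbs y ≤ 0 := by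
    simpa using hA.le_inv_mulVec (b := 0)
      ((cmpMatrix_mulVec_vecAbs_le A y).trans_eq (by ext; simp [hy, vecAbs]))
  exact hy0 (funext fun i => abs_nonpos_iff.mp (h i))

theorem IsHMatrix.abs_inv_apply_le {A : Matrix (Fin n) (Fin n) ℝ} (hA : IsHMatrix A)
    (i j : Fin n) : |A⁻¹ i j| ≤ (cmpMatrix A)⁻¹ i j := by
  have hcol : A *ᵥ (A⁻¹ *ᵥ Pi.single j 1) = Pi.single j 1 := by
    rw [mulVec_mulVec, mul_nonsing_inv _ hA.isUnit_det, one_mulVec]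
  have habs : vecAbs (Pi.single j 1 : Fin n → ℝ) = Pi.single j 1 := by
    ext k; by_cases hk : k = j <;> simp [vecAbs, hk]
  have h := hA.le_inv_mulVec ((cmpMatrix_mulVec_vecAbs_le A _).trans_eq
    ((congrArg vecAbs hcol).trans habs)) i
  rwa [vecAbs, mulVec_single_one, mulVec_single_one] at h

theorem exists_mulVec_eq_smul_of_isRoot_charpoly {ι K : Type*} [Fintype ι] [DecidableEq ι]
    [Field K] {A : Matrix ι ι K} {μ : K} (h : A.charpoly.IsRoot μ) :
    ∃ y ≠ 0, A *ᵥ y = μ • y := by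
  rw [Polynomial.IsRoot, eval_charpoly] at h
  obtain ⟨y, hy0, hy⟩ := exists_mulVec_eq_zero_iff.mpr h
  refine ⟨y, hy0, ?_⟩
  rw [sub_mulVec, sub_eq_zero, scalar_apply] at hy
  ext j
  simp [← hy, mulVec_diagonal]

/-- Collatz–Wielandt: bound `‖μ‖` at an index maximizing `‖y j‖ / v j`. -/
theorem norm_lt_of_mulVec_lt {T : Matrix (Fin n) (Fin n) ℝ} (hT : ∀ i j, 0 ≤ T i j)
    {v : Fin n → ℝ} (hv : ∀ i, 0 < v i) {c : ℝ} (hTv : ∀ i, (T *ᵥ v) i < c * v i)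
    {μ : ℂ} {y : Fin n → ℂ} (hy : y ≠ 0) (hTy : T.map Complex.ofReal *ᵥ y = μ • y) :
    ‖μ‖ < c := by
  obtain ⟨k, hk⟩ := Function.ne_iff.mp hy
  have : Nonempty (Fin n) := ⟨k⟩
  obtain ⟨i, hi⟩ := Finite.exists_max fun j => ‖y j‖ / v j
  set s := ‖y i‖ / v i
  have hs : 0 < s := (div_pos (norm_pos_iff.mpr hk) (hv k)).trans_le (hi k)
  have hyv : ∀ j, ‖y j‖ ≤ s * v j := fun j => (div_le_iff₀ (hv j)).mp (hi j)
  have hyi : ‖y i‖ = s * v i := by simp [s, div_mul_cancel₀ _ (hv i).ne']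
  have key : ‖μ‖ * (s * v i) < c * (s * v i) :=
    calc ‖μ‖ * (s * v i) = ‖∑ j, (T i j : ℂ) * y j‖ := by
          rw [← hyi, ← norm_mul, ← smul_eq_mul, ← Pi.smul_apply, ← hTy]; rfl
      _ ≤ ∑ j, T i j * ‖y j‖ :=
          (norm_sum_le _ _).trans_eq (by simp [abs_of_nonneg (hT i _)])
      _ ≤ ∑ j, T i j * (s * v j) :=
          Finset.sum_le_sum fun j _ => mul_le_mul_of_nonneg_left (hyv j) (hT i j)
      _ = s * (T *ᵥ v) i := by
          simp only [mulVec, dotProduct, Finset.mul_sum]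
          exact Finset.sum_congr rfl fun j _ => by ring
      _ < s * (c * v i) := mul_lt_mul_of_pos_left (hTv i) hs
      _ = c * (s * v i) := by ring
  exact lt_of_mul_lt_mul_right key (mul_pos hs (hv i)).le

theorem specRad_lt_one_of_mulVec_lt {T : Matrix (Fin n) (Fin n) ℝ} (hT : ∀ i j, 0 ≤ T i j)
    {v : Fin n → ℝ} (hv : ∀ i, 0 < v i) (hTv : ∀ i, (T *ᵥ v) i < v i) : specRad T < 1 := by
  set S := {x : ℝ | ∃ μ : ℂ, (T.map Complex.ofReal).charpoly.IsRoot μ ∧ x = ‖μ‖}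
  have hS : S.Finite := by
    refine ((Polynomial.finite_setOfPred_isRoot
      (charpoly_monic (T.map Complex.ofReal)).ne_zero).image (‖·‖ : ℂ → ℝ)).subset ?_
    rintro _ ⟨μ, hμ, rfl⟩
    exact ⟨μ, hμ, rfl⟩
  rcases S.eq_empty_or_nonempty with hempty | hne
  · change sSup S < 1
    rw [hempty, Real.sSup_empty]
    exact one_pos
  · rw [specRad, hS.csSup_lt_iff hne]
    rintro _ ⟨μ, hμ, rfl⟩
    obtain ⟨y, hy, hTy⟩ := exists_mulVec_eq_smul_of_isRoot_charpoly hμ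
    exact norm_lt_of_mulVec_lt hT hv (by simpa using hTv) hy hTy

theorem specRad_matAbs_inv_mul_lt_one {X W R : Matrix (Fin n) (Fin n) ℝ}
    (hXWR : cmpMatrix X = W + R) (hR : ∀ i j, 0 ≤ R i j) {v : Fin n → ℝ}
    (hv : ∀ i, 0 < v i) (hWv : ∀ i, 0 < (W *ᵥ v) i) : specRad (matAbs X⁻¹ * R) < 1 := by
  have hRv : 0 ≤ R *ᵥ v := mulVec_apply_nonneg hR fun i => (hv i).le
  have hX : IsHMatrix X := (isZMatrix_cmpMatrix X).isMMatrix_of_mulVec_pos hv fun i => by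
    rw [hXWR, add_mulVec]
    exact add_pos_of_pos_of_nonneg (hWv i) (hRv i)
  refine specRad_lt_one_of_mulVec_lt (fun i j => ?_) hv fun i => ?_
  · exact dotProduct_nonneg_of_nonneg (fun k => abs_nonneg _) fun k => hR k j
  · calc ((matAbs X⁻¹ * R) *ᵥ v) i = (matAbs X⁻¹ *ᵥ (R *ᵥ v)) i := by rw [mulVec_mulVec]
      _ ≤ ((cmpMatrix X)⁻¹ *ᵥ (R *ᵥ v)) i :=
          dotProduct_le_dotProduct_of_nonneg_right (hX.abs_inv_apply_le i) hRv
      _ = v i - ((cmpMatrix X)⁻¹ *ᵥ (W *ᵥ v)) i := by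
          rw [eq_sub_of_add_eq' hXWR.symm, sub_mulVec, mulVec_sub, mulVec_mulVec,
            nonsing_inv_mul _ hX.2.1, one_mulVec, Pi.sub_apply]
      _ < v i := sub_lt_self _ (IsMMatrix.inv_mulVec_pos hX hWv i)

theorem strictLower_add_strictUpper_apply (A : Matrix (Fin n) (Fin n) ℝ) (i j : Fin n) :
    (strictLower A + strictUpper A) i j = if i = j then 0 else A i j := by
  simp only [Matrix.add_apply, strictLower, strictUpper, of_apply]
  split_ifs <;> simp_all [Fin.ext_iff] <;> omega

theorem matAbs_sub_of_posDiag {A Ω : Matrix (Fin n) (Fin n) ℝ} (hΩ : posDiag Ω)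
    (hlt : ∀ i, Ω i i < A i i) :
    matAbs (Ω - A) = diagonal (fun i => A i i) + matAbs (strictLower A + strictUpper A) - Ω := by
  ext i j
  rw [Matrix.sub_apply, Matrix.add_apply]
  simp only [matAbs, of_apply, Matrix.sub_apply, strictLower_add_strictUpper_apply]
  rcases eq_or_ne i j with rfl | hij
  · simp [abs_of_neg (sub_neg.mpr (hlt i))]
  · simp [hij, hΩ.1 i j hij]

theorem pos_diag_of_cmpMatrix_eq_sub {A P Q : Matrix (Fin n) (Fin n) ℝ} (hsplit : A = P - Q)
    (hcompat : cmpMatrix A = cmpMatrix P - matAbs Q) {i : Fin n} (hA : 0 < A i i) :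
    0 < P i i := by
  have hc := congrFun (congrFun hcompat i) i
  have hs := congrFun (congrFun hsplit i) i
  simp only [cmpMatrix, matAbs, of_apply, Matrix.sub_apply, ↓reduceIte, abs_of_pos hA] at hc hs
  cases abs_cases (P i i) <;> cases abs_cases (Q i i) <;> linarith

theorem cmpMatrix_add_of_posDiag {P Ω : Matrix (Fin n) (Fin n) ℝ} (hΩ : posDiag Ω)
    (hP : ∀ i, 0 < P i i) : cmpMatrix (P + Ω) = cmpMatrix P + Ω := by
  ext i j
  rcases eq_or_ne i j with rfl | hij
  · simp [cmpMatrix, abs_of_pos (hP i), abs_of_pos (add_pos (hP i) (hΩ.2 i))]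
  · simp [cmpMatrix, hij, hΩ.1 i j hij]

end

theorem stmt14_general {n : ℕ} (A₁ M₁ N₁ L₁ Ω₁ : Matrix (Fin n) (Fin n) ℝ)
    (hA : IsHPlusMatrix A₁)
    (hΩ : posDiag Ω₁)
    (hsplit : A₁ = (M₁ + 1 - L₁) - (N₁ + 1 - L₁))
    (hcompat : cmpMatrix A₁ = cmpMatrix (M₁ + 1 - L₁) - matAbs (N₁ + 1 - L₁))
    (hlt : ∀ i, Ω₁ i i < A₁ i i)
    (hM : IsMMatrix (cmpMatrix A₁ + (2 : ℝ) • Ω₁ - Matrix.diagonal (fun i => A₁ i i)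
      - matAbs (strictLower A₁ + strictUpper A₁))) :
    specRad (matAbs ((M₁ + Ω₁ + 1 - L₁)⁻¹) *
      (matAbs (N₁ + 1 - L₁) + matAbs (Ω₁ - A₁))) < 1 := by
  set W := cmpMatrix A₁ + (2 : ℝ) • Ω₁ - Matrix.diagonal (fun i => A₁ i i)
      - matAbs (strictLower A₁ + strictUpper A₁)
  have hP : ∀ i, 0 < (M₁ + 1 - L₁) i i := fun i =>
    pos_diag_of_cmpMatrix_eq_sub hsplit hcompat (hA.2 i)
  have hX : cmpMatrix (M₁ + Ω₁ + 1 - L₁) = W + (matAbs (N₁ + 1 - L₁) + matAbs (Ω₁ - A₁)) := by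
    rw [show M₁ + Ω₁ + 1 - L₁ = M₁ + 1 - L₁ + Ω₁ by abel, cmpMatrix_add_of_posDiag hΩ hP,
      ← eq_sub_iff_add_eq.mp hcompat, matAbs_sub_of_posDiag hΩ hlt]
    module
  have hWv : W *ᵥ (W⁻¹ *ᵥ 1) = 1 := by
    rw [mulVec_mulVec, mul_nonsing_inv _ hM.2.1, one_mulVec]
  exact specRad_matAbs_inv_mul_lt_one hX (fun i j => add_nonneg (abs_nonneg _) (abs_nonneg _))
    (hM.inv_mulVec_pos (w := 1) fun _ => one_pos) fun i => by rw [hWv]; exact one_pos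

theorem stmt14 {n : ℕ} (A₁ M₁ N₁ L₁ Ω₁ : Matrix (Fin n) (Fin n) ℝ)
    (hA : IsHPlusMatrix A₁)
    (hL : L₁ = strictLower A₁) (hΩ : posDiag Ω₁)
    (hsplit : A₁ = (M₁ + 1 - L₁) - (N₁ + 1 - L₁))
    (hcompat : cmpMatrix A₁ = cmpMatrix (M₁ + 1 - L₁) - matAbs (N₁ + 1 - L₁))
    (hlt : ∀ i, Ω₁ i i < A₁ i i)
    (hM : IsMMatrix (cmpMatrix A₁ + (2 : ℝ) • Ω₁ - Matrix.diagonal (fun i => A₁ i i)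
      - matAbs (strictLower A₁ + strictUpper A₁))) :
    specRad (matAbs ((M₁ + Ω₁ + 1 - L₁)⁻¹) *
      (matAbs (N₁ + 1 - L₁) + matAbs (Ω₁ - A₁))) < 1 :=
  stmt14_general A₁ M₁ N₁ L₁ Ω₁ hA hΩ hsplit hcompat hlt hM
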